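/- Let s > 0, A > 0, h ∈ ℝ and q ∈ ℝ, and suppose q = E[tanh²(√s · Z + h)]. Let α = A · E[sech⁴(√s · Z + h)]. Then | A(1 − q) − (3/2)α | ≤ Λ₀ · A / s^{3/2}, where Λ₀ = (π² − 3)/(6√(2π)). -/

import Mathlib

open MeasureTheory Filter

/-- Standard Gaussian density. -/
noncomputable def stdGauss (z : ℝ) : ℝ := Real.exp (-z ^ 2 / 2) / Real.sqrt (2 * Real.pi)

/-- Gaussian expectation `E[f(h + σ Z)]` for a standard Gaussian `Z`. -/
noncomputable def gexp (f : ℝ → ℝ) (σ h : ℝ) : ℝ := ∫ z, f (h + σ * z) * stdGauss z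

/-- Hyperbolic secant. -/
noncomputable def sech (x : ℝ) : ℝ := 1 / Real.cosh x

/-!
Since `tanh' = sech²`, `tanh''' = 4 sech² - 6 sech⁴` and `tanh² = 1 - sech²`, the quantity
`A (1 - q) - (3/2) α` equals `(A / 4) E[tanh'''(h + √s Z)]`. Writing `Heₙ` for the Hermite
polynomials and `φ` for the Gaussian density, `(Heₙ φ)' = -Heₙ₊₁ φ`, so each Gaussian
integration by parts trades one derivative of `z ↦ tanh (h + √s z)`, i.e. a factor `√s`, for
one Hermite degree: `s^{3/2} E[tanh'''(h + √s Z)] = E[tanh(h + √s Z) He₃(Z)]`. As `|tanh| ≤ 1`,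
this is at most `E|He₃(Z)| = (2 + 8 e^{-3/2}) / √(2π) ≤ 4 / √(2π)`, and `1 / √(2π) ≤ Λ₀`
because `π² ≥ 9`.
-/

open Real Polynomial Set

lemma sech_pos (x : ℝ) : 0 < sech x := one_div_pos.2 (cosh_pos x)

lemma sech_le_one (x : ℝ) : sech x ≤ 1 := (div_le_one (cosh_pos x)).2 (one_le_cosh x)

lemma sech_sq_le_one (x : ℝ) : sech x ^ 2 ≤ 1 := pow_le_one₀ (sech_pos x).le (sech_le_one x)

lemma sech_pow_four_le_one (x : ℝ) : sech x ^ 4 ≤ 1 :=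
  pow_le_one₀ (sech_pos x).le (sech_le_one x)

lemma abs_tanh_le_one (x : ℝ) : |tanh x| ≤ 1 := (abs_tanh_lt_one x).le

lemma tanh_sq_add_sech_sq (x : ℝ) : tanh x ^ 2 + sech x ^ 2 = 1 := by
  have := cosh_sq_sub_sinh_sq x
  rw [tanh_eq_sinh_div_cosh, sech]
  field_simp
  linarith

lemma hasDerivAt_tanh (x : ℝ) : HasDerivAt tanh (sech x ^ 2) x := by
  rw [show tanh = fun y => sinh y / cosh y from funext tanh_eq_sinh_div_cosh]
  refine ((hasDerivAt_sinh x).div (hasDerivAt_cosh x) (cosh_pos x).ne').congr_deriv ?_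
  have := cosh_sq_sub_sinh_sq x
  rw [sech]
  field_simp
  linarith

lemma hasDerivAt_sech (x : ℝ) : HasDerivAt sech (-(sech x * tanh x)) x := by
  rw [show sech = fun y => (cosh y)⁻¹ from funext fun y => one_div _]
  refine ((hasDerivAt_cosh x).inv (cosh_pos x).ne').congr_deriv ?_
  rw [tanh_eq_sinh_div_cosh]
  field_simp

lemma hasDerivAt_sech_sq (x : ℝ) :
    HasDerivAt (fun y => sech y ^ 2) (-2 * (sech x ^ 2 * tanh x)) x :=
  ((hasDerivAt_sech x).pow 2).congr_deriv (by ring)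

lemma hasDerivAt_sech_sq_mul_tanh (x : ℝ) :
    HasDerivAt (fun y => -2 * (sech y ^ 2 * tanh y)) (4 * sech x ^ 2 - 6 * sech x ^ 4) x := by
  refine (((hasDerivAt_sech_sq x).mul (hasDerivAt_tanh x)).const_mul (-2)).congr_deriv ?_
  linear_combination (4 * sech x ^ 2) * tanh_sq_add_sech_sq x

lemma continuous_tanh : Continuous tanh :=
  continuous_iff_continuousAt.2 fun x => (hasDerivAt_tanh x).continuousAt

lemma continuous_sech : Continuous sech :=
  continuous_iff_continuousAt.2 fun x => (hasDerivAt_sech x).continuousAt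

lemma stdGauss_pos (z : ℝ) : 0 < stdGauss z := by
  unfold stdGauss
  positivity

lemma stdGauss_neg (z : ℝ) : stdGauss (-z) = stdGauss z := by
  simp only [stdGauss, neg_sq]

lemma integral_stdGauss : ∫ z, stdGauss z = 1 := by
  have h := integral_gaussian (1 / 2)
  rw [show π / (1 / 2) = 2 * π by ring] at h
  simp only [stdGauss, integral_div]
  rw [← div_self (sqrt_pos.2 (by positivity : 0 < 2 * π)).ne', ← h]
  congr 2 with z
  ring_nf

lemma hasDerivAt_stdGauss (z : ℝ) : HasDerivAt stdGauss (-z * stdGauss z) z :=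
  ((((hasDerivAt_pow 2 z).neg.div_const 2).exp).div_const √(2 * π)).congr_deriv (by
    simp only [stdGauss, Pi.neg_apply]
    push_cast
    ring)

lemma integrable_pow_mul_stdGauss (n : ℕ) : Integrable fun z : ℝ => z ^ n * stdGauss z := by
  have := (integrable_rpow_mul_exp_neg_mul_sq (b := 1 / 2) (by norm_num)
    (s := n) (by linarith [n.cast_nonneg (α := ℝ)])).div_const √(2 * π)
  refine this.congr (ae_of_all _ fun z => ?_)
  simp only [stdGauss, rpow_natCast]
  ring_nf

noncomputable def hermiteGauss (n : ℕ) (z : ℝ) : ℝ := aeval z (hermite n) * stdGauss z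

lemma hermiteGauss_zero : hermiteGauss 0 = stdGauss := by
  funext z
  simp [hermiteGauss]

lemma hermiteGauss_two (z : ℝ) : hermiteGauss 2 z = (z ^ 2 - 1) * stdGauss z := by
  rw [hermiteGauss]
  congr 1
  simp only [hermite_succ, hermite_zero, mul_one, derivative_one, sub_zero, derivative_X,
    aeval_sub, map_mul, aeval_X, map_one]
  ring

lemma hermiteGauss_three (z : ℝ) : hermiteGauss 3 z = (z ^ 3 - 3 * z) * stdGauss z := by
  rw [hermiteGauss]
  congr 1
  simp only [hermite_succ, hermite_zero, mul_one, derivative_one, sub_zero, derivative_X,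
    derivative_sub, derivative_mul, one_mul, aeval_sub, map_mul, aeval_X, map_one, map_add]
  ring

lemma hermiteGauss_three_neg (z : ℝ) : hermiteGauss 3 (-z) = -hermiteGauss 3 z := by
  rw [hermiteGauss_three, hermiteGauss_three, stdGauss_neg]
  ring

lemma hasDerivAt_hermiteGauss (n : ℕ) (z : ℝ) :
    HasDerivAt (hermiteGauss n) (-hermiteGauss (n + 1) z) z :=
  ((Polynomial.hasDerivAt_aeval (hermite n) z).mul (hasDerivAt_stdGauss z)).congr_deriv (by
    simp only [hermiteGauss, hermite_succ, map_sub, map_mul, aeval_X]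
    ring)

lemma integrable_hermiteGauss (n : ℕ) : Integrable (hermiteGauss n) := by
  have : hermiteGauss n = fun z => ∑ i ∈ Finset.range ((hermite n).natDegree + 1),
      ((hermite n).coeff i : ℝ) * (z ^ i * stdGauss z) := by
    funext z
    simp only [hermiteGauss, aeval_eq_sum_range, zsmul_eq_mul, Finset.sum_mul, mul_assoc]
  rw [this]
  exact integrable_finsetSum _ fun i _ => (integrable_pow_mul_stdGauss i).const_mul _

lemma integrable_stdGauss : Integrable stdGauss :=
  hermiteGauss_zero ▸ integrable_hermiteGauss 0

lemma tendsto_hermiteGauss_atTop (n : ℕ) : Tendsto (hermiteGauss n) atTop (nhds 0) :=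
  tendsto_zero_of_hasDerivAt_of_integrableOn_Ioi (a := 0)
    (fun z _ => hasDerivAt_hermiteGauss n z) (integrable_hermiteGauss (n + 1)).neg.integrableOn
    (integrable_hermiteGauss n).integrableOn

lemma integrable_comp_affine_mul_stdGauss {f : ℝ → ℝ} (hf : Continuous f) {C : ℝ}
    (hfC : ∀ x, |f x| ≤ C) (σ h : ℝ) :
    Integrable fun z => f (h + σ * z) * stdGauss z := by
  have hcont : Continuous fun z => f (h + σ * z) := by fun_prop
  exact integrable_stdGauss.bdd_mul hcont.aestronglyMeasurable
    (ae_of_all _ fun z => hfC (h + σ * z))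

lemma integral_deriv_mul_hermiteGauss {g g' : ℝ → ℝ} (hg : ∀ x, HasDerivAt g (g' x) x)
    {C C' : ℝ} (hgC : ∀ x, |g x| ≤ C) (hg'C : ∀ x, |g' x| ≤ C') (n : ℕ) :
    ∫ z, g' z * hermiteGauss n z = ∫ z, g z * hermiteGauss (n + 1) z := by
  have hg_meas : AEStronglyMeasurable g :=
    (continuous_iff_continuousAt.2 fun x => (hg x).continuousAt).aestronglyMeasurable
  have hg'_meas : AEStronglyMeasurable g' := by
    rw [show g' = deriv g from funext fun x => (hg x).deriv.symm]
    exact (measurable_deriv g).aestronglyMeasurable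
  have hparts := integral_mul_deriv_eq_deriv_mul_of_integrable (fun x _ => hg x)
    (fun x _ => hasDerivAt_hermiteGauss n x)
    ((integrable_hermiteGauss (n + 1)).neg.bdd_mul hg_meas (ae_of_all _ hgC))
    ((integrable_hermiteGauss n).bdd_mul hg'_meas (ae_of_all _ hg'C))
    ((integrable_hermiteGauss n).bdd_mul hg_meas (ae_of_all _ hgC))
  simp only [mul_neg, integral_neg, neg_inj] at hparts
  exact hparts.symm

lemma integral_deriv_comp_affine_mul_hermiteGauss {f f' : ℝ → ℝ}
    (hf : ∀ x, HasDerivAt f (f' x) x) {C C' : ℝ} (hfC : ∀ x, |f x| ≤ C)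
    (hf'C : ∀ x, |f' x| ≤ C') (σ h : ℝ) (n : ℕ) :
    σ * ∫ z, f' (h + σ * z) * hermiteGauss n z =
      ∫ z, f (h + σ * z) * hermiteGauss (n + 1) z := by
  rw [← integral_const_mul]
  simp_rw [← mul_assoc]
  refine integral_deriv_mul_hermiteGauss (fun z => ?_) (fun z => hfC _) (C' := |σ| * C')
    (fun z => ?_) n
  · exact ((hf _).comp z (((hasDerivAt_id z).const_mul σ).const_add h)).congr_deriv
      (by simp only [id]; ring)
  · rw [abs_mul]
    exact mul_le_mul_of_nonneg_left (hf'C _) (abs_nonneg σ)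

lemma pow_three_mul_gexp_tanh_third_deriv (σ h : ℝ) :
    σ ^ 3 * gexp (fun x => 4 * sech x ^ 2 - 6 * sech x ^ 4) σ h =
      ∫ z, tanh (h + σ * z) * hermiteGauss 3 z := by
  have hsech_sq : ∀ x, |sech x ^ 2| ≤ 1 := fun x => by
    rw [abs_of_nonneg (by positivity)]
    exact sech_sq_le_one x
  have hsech_sq_tanh : ∀ x, |-2 * (sech x ^ 2 * tanh x)| ≤ 2 := fun x => by
    rw [abs_mul, abs_mul, abs_neg, abs_two]
    nlinarith [hsech_sq x, abs_tanh_le_one x, abs_nonneg (sech x ^ 2), abs_nonneg (tanh x)]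
  have hthird : ∀ x, |4 * sech x ^ 2 - 6 * sech x ^ 4| ≤ 10 := fun x => by
    have := sech_sq_le_one x
    have := sech_pow_four_le_one x
    rw [abs_le]
    constructor <;> nlinarith [sech_pos x]
  simp only [gexp, ← hermiteGauss_zero]
  calc σ ^ 3 * ∫ z, (4 * sech (h + σ * z) ^ 2 - 6 * sech (h + σ * z) ^ 4) * hermiteGauss 0 z
      = σ ^ 2 * (σ * ∫ z, (4 * sech (h + σ * z) ^ 2 - 6 * sech (h + σ * z) ^ 4)
          * hermiteGauss 0 z) := by ring
    _ = σ * (σ * ∫ z, -2 * (sech (h + σ * z) ^ 2 * tanh (h + σ * z)) * hermiteGauss 1 z) := by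
      rw [integral_deriv_comp_affine_mul_hermiteGauss hasDerivAt_sech_sq_mul_tanh hsech_sq_tanh
        hthird]
      ring
    _ = σ * ∫ z, sech (h + σ * z) ^ 2 * hermiteGauss 2 z := by
      rw [integral_deriv_comp_affine_mul_hermiteGauss hasDerivAt_sech_sq hsech_sq hsech_sq_tanh]
    _ = ∫ z, tanh (h + σ * z) * hermiteGauss 3 z :=
      integral_deriv_comp_affine_mul_hermiteGauss hasDerivAt_tanh abs_tanh_le_one hsech_sq σ h 2

lemma one_sub_gexp_tanh_sq_sub_gexp_sech_pow_four (σ h : ℝ) :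
    1 - gexp (fun x => tanh x ^ 2) σ h - 3 / 2 * gexp (fun x => sech x ^ 4) σ h =
      gexp (fun x => 4 * sech x ^ 2 - 6 * sech x ^ 4) σ h / 4 := by
  have htanh_sq : ∀ x, |tanh x ^ 2| ≤ 1 := fun x => by
    rw [abs_pow]
    exact pow_le_one₀ (abs_nonneg _) (abs_tanh_le_one x)
  have hsech_pow : ∀ x, |sech x ^ 4| ≤ 1 := fun x => by
    rw [abs_of_nonneg (by positivity)]
    exact sech_pow_four_le_one x
  have htanh := integrable_comp_affine_mul_stdGauss (f := fun x => tanh x ^ 2)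
    (continuous_tanh.pow 2) htanh_sq σ h
  have hsech := integrable_comp_affine_mul_stdGauss (f := fun x => sech x ^ 4)
    (continuous_sech.pow 4) hsech_pow σ h
  rw [gexp, gexp, gexp, ← integral_stdGauss, ← integral_sub integrable_stdGauss htanh,
    ← integral_const_mul, ← integral_sub (integrable_stdGauss.sub' htanh) (hsech.const_mul _),
    ← integral_div]
  congr with z
  linear_combination (-stdGauss z) * tanh_sq_add_sech_sq (h + σ * z)

lemma integral_Ioc_abs_hermiteGauss_three :
    ∫ z in Ioc 0 √3, |hermiteGauss 3 z| = stdGauss 0 + 2 * stdGauss √3 := by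
  have hr : 0 ≤ √3 := sqrt_nonneg 3
  have hr2 : √3 ^ 2 = 3 := sq_sqrt (by norm_num)
  rw [← intervalIntegral.integral_of_le hr]
  calc ∫ z in 0..√3, |hermiteGauss 3 z| = ∫ z in 0..√3, -hermiteGauss 3 z := by
        refine intervalIntegral.integral_congr fun z hz => abs_of_nonpos ?_
        rw [uIcc_of_le hr] at hz
        have : z ^ 2 ≤ 3 := hr2 ▸ pow_le_pow_left₀ hz.1 hz.2 2
        rw [hermiteGauss_three]
        exact mul_nonpos_of_nonpos_of_nonneg (by nlinarith [hz.1]) (stdGauss_pos z).le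
    _ = hermiteGauss 2 √3 - hermiteGauss 2 0 :=
        intervalIntegral.integral_eq_sub_of_hasDerivAt (fun z _ => hasDerivAt_hermiteGauss 2 z)
          (integrable_hermiteGauss 3).neg.intervalIntegrable
    _ = stdGauss 0 + 2 * stdGauss √3 := by
        rw [hermiteGauss_two, hermiteGauss_two, hr2]
        ring

lemma integral_Ioi_abs_hermiteGauss_three :
    ∫ z in Ioi √3, |hermiteGauss 3 z| = 2 * stdGauss √3 := by
  have hr : 0 < √3 := by positivity
  have hr2 : √3 ^ 2 = 3 := sq_sqrt (by norm_num)
  calc ∫ z in Ioi √3, |hermiteGauss 3 z| = ∫ z in Ioi √3, hermiteGauss 3 z := by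
        refine setIntegral_congr_fun measurableSet_Ioi fun z hz => abs_of_nonneg ?_
        have : 3 ≤ z ^ 2 := hr2 ▸ pow_le_pow_left₀ hr.le (le_of_lt hz) 2
        rw [hermiteGauss_three]
        exact mul_nonneg (by nlinarith [hr.trans hz]) (stdGauss_pos z).le
    _ = 0 - -hermiteGauss 2 √3 :=
        integral_Ioi_of_hasDerivAt_of_tendsto' (f := fun z => -hermiteGauss 2 z)
          (fun z _ => (hasDerivAt_hermiteGauss 2 z).neg.congr_deriv (neg_neg _))
          (integrable_hermiteGauss 3).integrableOn
          (by simpa using (tendsto_hermiteGauss_atTop 2).neg)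
    _ = 2 * stdGauss √3 := by
        rw [hermiteGauss_two, hr2]
        ring

lemma integral_abs_hermiteGauss_three :
    ∫ z, |hermiteGauss 3 z| = 2 * stdGauss 0 + 8 * stdGauss √3 := by
  have heven : ∀ z, |hermiteGauss 3 (|z|)| = |hermiteGauss 3 z| := fun z => by
    rcases abs_choice z with hz | hz <;> simp only [hz, hermiteGauss_three_neg, abs_neg]
  have hint := (integrable_hermiteGauss 3).abs.integrableOn (s := Ioi 0)
  have hr : 0 ≤ √3 := sqrt_nonneg 3
  rw [← funext heven, integral_comp_abs (f := fun z => |hermiteGauss 3 z|),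
    ← Ioc_union_Ioi_eq_Ioi hr, setIntegral_union Ioc_disjoint_Ioi_same measurableSet_Ioi
      (hint.mono_set Ioc_subset_Ioi_self) (hint.mono_set (Ioi_subset_Ioi hr)),
    integral_Ioc_abs_hermiteGauss_three, integral_Ioi_abs_hermiteGauss_three]
  ring

lemma exp_neg_three_halves_le : exp (-(3 / 2)) ≤ 1 / 4 := by
  have h1 : (2.7 : ℝ) ≤ exp 1 := by linarith [exp_one_gt_d9]
  have h2 : (1.5 : ℝ) ≤ exp (1 / 2) := by linarith [add_one_le_exp (1 / 2 : ℝ)]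
  have h3 : 4 ≤ exp (3 / 2) := by
    rw [show (3 / 2 : ℝ) = 1 + 1 / 2 by norm_num, exp_add]
    nlinarith
  rw [exp_neg, one_div]
  exact inv_anti₀ (by norm_num) h3

lemma integral_abs_hermiteGauss_three_le : ∫ z, |hermiteGauss 3 z| ≤ 4 / √(2 * π) := by
  rw [integral_abs_hermiteGauss_three, stdGauss, stdGauss, sq_sqrt (by norm_num : (0 : ℝ) ≤ 3)]
  have := exp_neg_three_halves_le
  have : 0 < √(2 * π) := by positivity
  field_simp
  norm_num
  linarith

theorem stmt_5 (s A h q : ℝ) (hs : 0 < s) (hA : 0 < A)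
    (hq : q = gexp (fun x => Real.tanh x ^ 2) (Real.sqrt s) h)
    (α : ℝ) (hα : α = A * gexp (fun x => sech x ^ 4) (Real.sqrt s) h) :
    |A * (1 - q) - 3 / 2 * α|
      ≤ (Real.pi ^ 2 - 3) / (6 * Real.sqrt (2 * Real.pi)) * A / s ^ ((3 : ℝ) / 2) := by
  have hs32 : s ^ ((3 : ℝ) / 2) = √s ^ 3 := by
    rw [sqrt_eq_rpow, ← rpow_natCast, ← rpow_mul hs.le]
    norm_num
  set σ := √s
  have hσ : 0 < σ := sqrt_pos.2 hs
  have hdiff : A * (1 - q) - 3 / 2 * α =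
      A / (4 * σ ^ 3) * ∫ z, tanh (h + σ * z) * hermiteGauss 3 z := by
    rw [hq, hα, ← pow_three_mul_gexp_tanh_third_deriv, div_mul_eq_mul_div A,
      eq_div_iff (by positivity)]
    linear_combination (4 * σ ^ 3 * A) * one_sub_gexp_tanh_sq_sub_gexp_sech_pow_four σ h
  have hJ : |∫ z, tanh (h + σ * z) * hermiteGauss 3 z| ≤ 4 / √(2 * π) := by
    refine abs_integral_le_integral_abs.trans ((integral_mono_of_nonneg (ae_of_all _ fun z =>
      abs_nonneg _) (integrable_hermiteGauss 3).abs (ae_of_all _ fun z => ?_)).trans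
      integral_abs_hermiteGauss_three_le)
    dsimp only
    rw [abs_mul]
    exact mul_le_of_le_one_left (abs_nonneg _) (abs_tanh_le_one _)
  have hΛ : 1 / √(2 * π) ≤ (π ^ 2 - 3) / (6 * √(2 * π)) := by
    have h9 : 9 ≤ π ^ 2 := by nlinarith [pi_gt_three]
    rw [div_le_div_iff₀ (by positivity) (by positivity)]
    nlinarith [sqrt_pos.2 (by positivity : 0 < 2 * π)]
  rw [hdiff, hs32, abs_mul, abs_of_pos (by positivity)]
  calc A / (4 * σ ^ 3) * |∫ z, tanh (h + σ * z) * hermiteGauss 3 z|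
      ≤ A / (4 * σ ^ 3) * (4 / √(2 * π)) := by gcongr
    _ = 1 / √(2 * π) * A / σ ^ 3 := by field_simp
    _ ≤ (π ^ 2 - 3) / (6 * √(2 * π)) * A / σ ^ 3 := by gcongr
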